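/- arXiv:2003.11086 — 2 statements merged into one kernel-verified Lean document; each statement's English description precedes it below -/
import Mathlib

section
/- Let m ≥ 1, d, and k be natural numbers. Suppose B₁, ..., B_k are pairwise disjoint boxes (sets of the form {x : Fin d → ℕ | ∀ i, a(i) ≤ x(i) < b(i)} for some a, b : Fin d → ℕ with a(i) ≤ b(i) ≤ 2^m) whose union is the full grid {0, 1, ..., 2^m − 1}^d. Then there exists a family of at most k·(2m)^d pairwise disjoint dyadic boxes of the grid whose union is the full grid and such that every dyadic box in the family is contained in one of the boxes B₁, ..., B_k. -/
/-- An axis-aligned box in `ℕ^d` with all vertices bounded by `2^m`: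
a set of the form `{x | ∀ i, a i ≤ x i < b i}` with `a i ≤ b i ≤ 2^m` for all `i`. -/
def IsGridBox (m d : ℕ) (B : Set (Fin d → ℕ)) : Prop :=
  ∃ a b : Fin d → ℕ, (∀ i, a i ≤ b i) ∧ (∀ i, b i ≤ 2 ^ m) ∧
    B = {x : Fin d → ℕ | ∀ i, a i ≤ x i ∧ x i < b i}

/-- The dyadic box of the grid `{0, 1, ..., 2^m - 1}^d` determined, in each coordinate `i`,
by a level `(p i).1` and an index `(p i).2`. -/
def dyadicBox {d : ℕ} (p : Fin d → ℕ × ℕ) : Set (Fin d → ℕ) :=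
  {x | ∀ i, (p i).2 * 2 ^ (p i).1 ≤ x i ∧ x i < ((p i).2 + 1) * 2 ^ (p i).1}

/-- `p` encodes a legal dyadic box of the grid `{0, 1, ..., 2^m - 1}^d`:
in each coordinate the level is at most `m` and the index is less than `2^(m - level)`. -/
def IsDyadicIndex (m d : ℕ) (p : Fin d → ℕ × ℕ) : Prop :=
  ∀ i, (p i).1 ≤ m ∧ (p i).2 < 2 ^ (m - (p i).1)

/-!
Every coordinate interval `[a, b)` of a grid box, `b ≤ 2^m`, is a disjoint union of at most `2m`
dyadic intervals: `[a, b)` is the doubling `{x | x / 2 ∈ [⌈a/2⌉, ⌊b/2⌋)}` of an interval of the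
grid of side `2^(m-1)` plus at most one point at each end, so each halving step adds at most two
pieces. Taking products, each of the `k` boxes is tiled by at most `(2m)^d` dyadic boxes.
-/

def IsTiling {ι α : Type*} (f : ι → Set α) (s : Finset ι) (A : Set α) : Prop :=
  (s : Set ι).PairwiseDisjoint f ∧ ⋃ i ∈ s, f i = A

namespace IsTiling

variable {ι α : Type*} {f : ι → Set α} {s t : Finset ι} {A B : Set α}

theorem subset (h : IsTiling f s A) {i : ι} (hi : i ∈ s) : f i ⊆ A :=
  h.2 ▸ Set.subset_biUnion_of_mem (u := f) hi

theorem union [DecidableEq ι] (hs : IsTiling f s A) (ht : IsTiling f t B) (hAB : Disjoint A B) :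
    IsTiling f (s ∪ t) (A ∪ B) := by
  refine ⟨?_, by rw [Finset.set_biUnion_union, hs.2, ht.2]⟩
  rw [Finset.coe_union, Set.pairwiseDisjoint_union]
  exact ⟨hs.1, ht.1, fun i hi j hj _ => hAB.mono (hs.subset hi) (ht.subset hj)⟩

theorem biUnion {κ : Type*} [DecidableEq ι] {u : Finset κ} {T : κ → Finset ι} {A : κ → Set α}
    (hT : ∀ j ∈ u, IsTiling f (T j) (A j)) (hA : (u : Set κ).PairwiseDisjoint A) :
    IsTiling f (u.biUnion T) (⋃ j ∈ u, A j) := by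
  refine ⟨?_, ?_⟩
  · intro p hp q hq hpq
    obtain ⟨j, hj, hpj⟩ := Finset.mem_biUnion.1 hp
    obtain ⟨j', hj', hqj⟩ := Finset.mem_biUnion.1 hq
    obtain rfl | hjj := eq_or_ne j j'
    · exact (hT j hj).1 hpj hqj hpq
    · exact (hA hj hj' hjj).mono ((hT j hj).subset hpj) ((hT j' hj').subset hqj)
  · rw [Finset.set_biUnion_biUnion]
    exact Set.iUnion₂_congr fun j hj => (hT j hj).2

end IsTiling

def dyadicInterval (p : ℕ × ℕ) : Set ℕ :=
  Set.Ico (p.2 * 2 ^ p.1) ((p.2 + 1) * 2 ^ p.1)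

theorem mem_dyadicBox {d : ℕ} {p : Fin d → ℕ × ℕ} {x : Fin d → ℕ} :
    x ∈ dyadicBox p ↔ ∀ i, x i ∈ dyadicInterval (p i) :=
  Iff.rfl

theorem dyadicInterval_zero (x : ℕ) : dyadicInterval (0, x) = {x} := by
  ext y; simp [dyadicInterval]; omega

theorem dyadicInterval_succ (ℓ j : ℕ) :
    dyadicInterval (ℓ + 1, j) = (· / 2) ⁻¹' dyadicInterval (ℓ, j) := by
  ext x
  simp only [dyadicInterval, Set.mem_preimage, Set.mem_Ico, pow_succ, ← mul_assoc,
    Nat.le_div_iff_mul_le two_pos, Nat.div_lt_iff_lt_mul two_pos]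

theorem preimage_div_two_Ico (a b : ℕ) : (· / 2) ⁻¹' Set.Ico a b = Set.Ico (2 * a) (2 * b) := by
  ext x; simp only [Set.mem_preimage, Set.mem_Ico]; omega

theorem isTiling_Ico_singletons (a b : ℕ) :
    IsTiling dyadicInterval ((Finset.Ico a b).image (0, ·)) (Set.Ico a b) := by
  refine ⟨?_, ?_⟩
  · intro p hp q hq hpq
    obtain ⟨x, -, rfl⟩ := Finset.mem_image.1 hp
    obtain ⟨y, -, rfl⟩ := Finset.mem_image.1 hq
    simp only [Function.onFun, dyadicInterval_zero, Set.disjoint_singleton]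
    exact fun h => hpq (h ▸ rfl)
  · ext y; simp [dyadicInterval_zero]

theorem IsTiling.preimage_div_two {s : Finset (ℕ × ℕ)} {A : Set ℕ}
    (h : IsTiling dyadicInterval s A) :
    IsTiling dyadicInterval (s.image fun p => (p.1 + 1, p.2)) ((· / 2) ⁻¹' A) := by
  refine ⟨?_, ?_⟩
  · intro p' hp' q' hq' hpq
    obtain ⟨p, hp, rfl⟩ := Finset.mem_image.1 hp'
    obtain ⟨q, hq, rfl⟩ := Finset.mem_image.1 hq'
    simp only [Function.onFun, dyadicInterval_succ]
    exact (h.1 hp hq fun h => hpq (h ▸ rfl)).preimage _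
  · simp only [Finset.set_biUnion_finset_image, dyadicInterval_succ, ← Set.preimage_iUnion₂, h.2]

theorem card_Ico_singletons_le (a b : ℕ) : ((Finset.Ico a b).image (0, ·)).card ≤ b - a :=
  (Finset.card_image_le).trans (Nat.card_Ico a b).le

theorem exists_isTiling_Ico {m : ℕ} (hm : 1 ≤ m) {a b : ℕ} (hb : b ≤ 2 ^ m) :
    ∃ s : Finset (ℕ × ℕ), s.card ≤ 2 * m ∧ IsTiling dyadicInterval s (Set.Ico a b) := by
  induction m, hm using Nat.le_induction generalizing a b with
  | base =>
    exact ⟨_, (card_Ico_singletons_le a b).trans (by omega), isTiling_Ico_singletons a b⟩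
  | succ m _ ih =>
    by_cases hab : b ≤ a
    · exact ⟨_, (card_Ico_singletons_le a b).trans (by omega), isTiling_Ico_singletons a b⟩
    have hb' : b / 2 ≤ 2 ^ m := by rw [pow_succ] at hb; omega
    obtain ⟨s, hs_card, hs⟩ := ih (a := (a + 1) / 2) hb'
    have hmid := hs.preimage_div_two
    rw [preimage_div_two_Ico] at hmid
    have hleft := (isTiling_Ico_singletons a _).union hmid Set.Ico_disjoint_Ico_same
    rw [Set.Ico_union_Ico_eq_Ico (by omega) (by omega)] at hleft
    have hall := hleft.union (isTiling_Ico_singletons _ b) Set.Ico_disjoint_Ico_same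
    rw [Set.Ico_union_Ico_eq_Ico (by omega) (by omega)] at hall
    refine ⟨_, ?_, hall⟩
    grw [Finset.card_union_le, Finset.card_union_le, card_Ico_singletons_le,
      card_Ico_singletons_le, Finset.card_image_le, hs_card]
    omega

theorem isTiling_piFinset {d : ℕ} {s : Fin d → Finset (ℕ × ℕ)} {A : Fin d → Set ℕ}
    (hs : ∀ i, IsTiling dyadicInterval (s i) (A i)) :
    IsTiling dyadicBox (Fintype.piFinset s) {x | ∀ i, x i ∈ A i} := by
  refine ⟨?_, ?_⟩
  · intro p hp q hq hpq
    obtain ⟨i, hi⟩ := Function.ne_iff.1 hpq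
    have hdisj := (hs i).1 (Fintype.mem_piFinset.1 hp i) (Fintype.mem_piFinset.1 hq i) hi
    exact Set.disjoint_left.2 fun x hxp hxq => Set.disjoint_left.1 hdisj (hxp i) (hxq i)
  · ext x
    simp only [Set.mem_iUnion, Fintype.mem_piFinset, mem_dyadicBox, Set.mem_ofPred_eq,
      exists_prop]
    constructor
    · rintro ⟨p, hp, hx⟩ i
      exact (hs i).subset (hp i) (hx i)
    · intro hx
      have hx' : ∀ i, ∃ q ∈ s i, x i ∈ dyadicInterval q := fun i => by
        simpa only [← (hs i).2, Set.mem_iUnion, exists_prop] using hx i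
      choose p hp hxp using hx'
      exact ⟨p, hp, hxp⟩

theorem IsGridBox.exists_isTiling {m d : ℕ} {B : Set (Fin d → ℕ)} (hm : 1 ≤ m)
    (hB : IsGridBox m d B) :
    ∃ t : Finset (Fin d → ℕ × ℕ), t.card ≤ (2 * m) ^ d ∧ IsTiling dyadicBox t B := by
  obtain ⟨a, b, -, hb, rfl⟩ := hB
  choose s hs_card hs using fun i => exists_isTiling_Ico hm (a := a i) (hb i)
  refine ⟨Fintype.piFinset s, ?_, isTiling_piFinset hs⟩
  rw [Fintype.card_piFinset]
  simpa using Finset.prod_le_pow_card Finset.univ _ _ fun i _ => hs_card i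

theorem le_and_lt_pow_sub_of_succ_mul_pow_le {ℓ j m : ℕ} (h : (j + 1) * 2 ^ ℓ ≤ 2 ^ m) :
    ℓ ≤ m ∧ j < 2 ^ (m - ℓ) := by
  have hℓ : ℓ ≤ m := (Nat.pow_le_pow_iff_right one_lt_two).1 <|
    (Nat.le_mul_of_pos_left _ j.succ_pos).trans h
  refine ⟨hℓ, Nat.lt_of_succ_le <| Nat.le_of_mul_le_mul_right ?_ (Nat.two_pow_pos ℓ)⟩
  rwa [← pow_add, Nat.sub_add_cancel hℓ]

theorem isDyadicIndex_of_dyadicBox_subset {m d : ℕ} {p : Fin d → ℕ × ℕ}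
    (h : dyadicBox p ⊆ {x | ∀ i, x i < 2 ^ m}) : IsDyadicIndex m d p := by
  have hcorner : (fun i => ((p i).2 + 1) * 2 ^ (p i).1 - 1) ∈ dyadicBox p := fun i => by
    have := Nat.one_le_two_pow (n := (p i).1)
    dsimp only
    rw [add_one_mul]
    omega
  exact fun i => le_and_lt_pow_sub_of_succ_mul_pow_le (by have := h hcorner i; omega)

/-- If pairwise disjoint grid-aligned boxes `B 1, ..., B k` partition the full grid
`{0, 1, ..., 2^m - 1}^d`, then there is a family of at most `k·(2m)^d` pairwise disjoint
dyadic boxes whose union is the full grid and each of which is contained in some `B j`. -/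
theorem partition_refined_by_dyadic_boxes
    (m d k : ℕ) (hm : 1 ≤ m) (B : Fin k → Set (Fin d → ℕ))
    (hbox : ∀ j, IsGridBox m d (B j))
    (hdisj : Pairwise (fun j j' => Disjoint (B j) (B j')))
    (hcov : (⋃ j, B j) = {x : Fin d → ℕ | ∀ i, x i < 2 ^ m}) :
    ∃ t : Finset (Fin d → ℕ × ℕ),
      t.card ≤ k * (2 * m) ^ d ∧
      (∀ p ∈ t, IsDyadicIndex m d p) ∧
      (t : Set (Fin d → ℕ × ℕ)).Pairwise (fun p q => Disjoint (dyadicBox p) (dyadicBox q)) ∧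
      (⋃ p ∈ t, dyadicBox p) = {x : Fin d → ℕ | ∀ i, x i < 2 ^ m} ∧
      (∀ p ∈ t, ∃ j, dyadicBox p ⊆ B j) := by
  classical
  choose T hT_card hT using fun j => (hbox j).exists_isTiling hm
  have ht := IsTiling.biUnion (u := Finset.univ) (fun j _ => hT j)
    (by rw [Finset.coe_univ]; exact Set.pairwise_univ.2 hdisj)
  simp only [Finset.mem_univ, Set.iUnion_true, hcov] at ht
  refine ⟨Finset.univ.biUnion T, ?_, fun p hp => isDyadicIndex_of_dyadicBox_subset (ht.subset hp),
    ht.1, ht.2, fun p hp => ?_⟩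
  · simpa using Finset.card_biUnion_le_card_mul Finset.univ _ _ fun j _ => hT_card j
  · obtain ⟨j, -, hpj⟩ := Finset.mem_biUnion.1 hp
    exact ⟨j, (hT j).subset hpj⟩
end

section
/- There exists a universal constant C > 0 with the following property. Let (Ω, P) be a probability space, let σ > 0, let n ≥ 2, and let ε₁, ..., εₙ : Ω → ℝ be independent random variables, each sub-Gaussian with variance proxy σ². Let R₁, ..., R_t be pairwise disjoint subsets of {1, ..., n}; for each j let S_j be a linear subspace of ℝ^{R_j} (the Euclidean space of real functions on R_j) with dim S_j ≤ r; and let f : {1, ..., n} → ℝ be such that the restriction f|_{R_j} lies in S_j for every j. For each j, let f̂_j ∈ S_j be a least-squares fit of (f + ε)|_{R_j} over S_j, i.e., ‖(f + ε)|_{R_j} − f̂_j‖ ≤ ‖(f + ε)|_{R_j} − v‖ for all v ∈ S_j. Then for every δ ∈ (0, 1), with probability at least 1 − δ: Σ_{j=1}^{t} ‖f̂_j − f|_{R_j}‖² ≤ C·σ²·t·(r + log(n/δ)). -/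
/-!
The least-squares fit on a block `R` is the orthogonal projection onto `S` of the noisy data, so
its error `w = f̂ - f|_R` lies in `S` and satisfies `⟪x, w⟫ = ⟪x, ε|_R⟫` for every `x ∈ S`. For a
`1/2`-net `N` of the unit sphere of `S` this gives `‖w‖ ≤ 2 max_{x ∈ N} ⟪x, ε|_R⟫`, and a volume
argument provides such a net with at most `5 ^ dim S` points. Each `⟪x, ε|_R⟫` with `‖x‖ = 1` is
sub-Gaussian with variance proxy `σ²` (Hoeffding), and only blocks with `R ≠ ∅` have nonempty
nets, of which there are at most `n` by disjointness. A union bound over the `n · 5 ^ r` net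
points at the level `s = σ √(2 (r log 5 + log (n / δ)))` shows that with probability `1 - δ`
every block error is at most `2 s`, whence the total squared error is at most `t (2 s)²`.
-/

open MeasureTheory ProbabilityTheory

/-- A real random variable `X` is sub-Gaussian with variance proxy `σ²` if it is centered
and its moment generating function satisfies `E[exp(t X)] ≤ exp(t² σ² / 2)` for all `t`. -/
def IsSubGaussian {Ω : Type*} [MeasurableSpace Ω] (P : Measure Ω) (σ : ℝ) (X : Ω → ℝ) : Prop :=
  Integrable X P ∧ (∫ ω, X ω ∂P) = 0 ∧
    ∀ t : ℝ, Integrable (fun ω => Real.exp (t * X ω)) P ∧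
      (∫ ω, Real.exp (t * X ω) ∂P) ≤ Real.exp (t ^ 2 * σ ^ 2 / 2)

/-- The restriction of `g : Fin n → ℝ` to an index set `R`, as a vector of the Euclidean
space of real functions on `R`. -/
noncomputable def restrictTo {n : ℕ} (R : Finset (Fin n)) (g : Fin n → ℝ) : EuclideanSpace ℝ ↥R :=
  (WithLp.equiv 2 (↥R → ℝ)).symm (fun i => g i)

open Metric Set Module Real
open scoped NNReal ENNReal RealInnerProductSpace

section Nets

variable {E : Type*} [NormedAddCommGroup E] [NormedSpace ℝ E] [FiniteDimensional ℝ E]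

theorem encard_le_of_isSeparated_of_subset_closedBall {ε : ℝ≥0} (hε : 0 < ε) {C : Set E}
    (hCε : C ⊆ closedBall 0 (2 * ε)) (hC : IsSeparated ε C) :
    C.encard ≤ (5 ^ finrank ℝ E : ℕ) := by
  classical
  by_contra! hlarge
  obtain ⟨D, hDC, hD⟩ := exists_subset_encard_eq (Order.add_one_le_of_lt hlarge)
  have hDfin : D.Finite := finite_of_encard_eq_coe hD
  -- rescaling by `ε⁻¹` turns `D` into a `1`-separated set in the ball of radius `2`
  have hcard := Besicovitch.card_le_of_separated (hDfin.toFinset.image ((ε : ℝ)⁻¹ • ·)) ?_ ?_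
  · rw [Finset.card_image_of_injective _ (smul_right_injective E (by positivity)),
      ← ENat.natCast_le_natCast, ← hDfin.encard_eq_coe_toFinset_card, hD] at hcard
    exact absurd hcard (by norm_cast; simp)
  · simp only [Finset.mem_image, Set.Finite.mem_toFinset, forall_exists_index, and_imp]
    rintro _ c hc rfl
    have := mem_closedBall_zero_iff.1 (hCε (hDC hc))
    rw [norm_smul, norm_inv, NNReal.norm_eq, inv_mul_le_iff₀ (by positivity)]
    linarith
  · simp only [Finset.mem_image, Set.Finite.mem_toFinset, forall_exists_index, and_imp]
    rintro _ c hc rfl _ d hd rfl hcd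
    have hsep : (ε : ℝ≥0∞) < edist c d := hC (hDC hc) (hDC hd) (by rintro rfl; exact hcd rfl)
    rw [edist_nndist, ENNReal.coe_lt_coe, ← NNReal.coe_lt_coe, coe_nndist, dist_eq_norm] at hsep
    rw [← smul_sub, norm_smul, norm_inv, NNReal.norm_eq, inv_mul_eq_div,
      le_div_iff₀ (by positivity)]
    linarith

variable (E) in
theorem exists_finset_isCover_sphere :
    ∃ N : Finset E, ↑N ⊆ sphere (0 : E) 1 ∧ N.card ≤ 5 ^ finrank ℝ E ∧
      IsCover (1 / 2) (sphere (0 : E) 1) N := by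
  set A := sphere (0 : E) 1
  have hpacking : packingNumber (1 / 2) A ≤ (5 ^ finrank ℝ E : ℕ) :=
    iSup₂_le fun C hCA ↦ iSup_le fun hC ↦ encard_le_of_isSeparated_of_subset_closedBall
      (by norm_num) (hCA.trans <| by norm_num [A, sphere_subset_closedBall]) hC
  have hpacking_ne_top : packingNumber (1 / 2) A ≠ ⊤ := ne_top_of_le_ne_top (by simp) hpacking
  have hfinite : (maximalSeparatedSet (1 / 2) A).Finite :=
    finite_of_encard_le_coe ((encard_maximalSeparatedSet hpacking_ne_top).trans_le hpacking)
  refine ⟨hfinite.toFinset, by simpa using maximalSeparatedSet_subset, ?_, ?_⟩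
  · rw [← ENat.natCast_le_natCast, ← hfinite.encard_eq_coe_toFinset_card,
      encard_maximalSeparatedSet hpacking_ne_top]
    exact hpacking
  · simpa using isCover_maximalSeparatedSet hpacking_ne_top

end Nets

section LeastSquares

variable {F : Type*} [NormedAddCommGroup F] [InnerProductSpace ℝ F]

theorem norm_le_two_mul_of_isCover_sphere {N : Set F} (hN : IsCover (1 / 2) (sphere 0 1) N)
    {w : F} {s : ℝ} (hs : 0 ≤ s) (hw : ∀ x ∈ N, ⟪x, w⟫ < s) : ‖w‖ ≤ 2 * s := by
  rcases eq_or_ne w 0 with rfl | hw0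
  · simpa using hs
  set v := ‖w‖⁻¹ • w
  have hv : ⟪v, w⟫ = ‖w‖ := by
    rw [real_inner_smul_left, real_inner_self_eq_norm_sq]
    field_simp
  obtain ⟨x, hxN, hvx⟩ := hN (x := v) (by simp [v, norm_smul, hw0])
  replace hvx : ‖v - x‖ ≤ 1 / 2 := by
    change edist v x ≤ (1 / 2 : ℝ≥0) at hvx
    rwa [edist_le_coe, ← NNReal.coe_le_coe, coe_nndist, dist_eq_norm, NNReal.coe_div,
      NNReal.coe_one, NNReal.coe_two] at hvx
  have : ‖w‖ / 2 ≤ ⟪x, w⟫ := calc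
    ‖w‖ / 2 = ‖w‖ - 1 / 2 * ‖w‖ := by ring
    _ ≤ ⟪v, w⟫ - ‖v - x‖ * ‖w‖ := by rw [hv]; gcongr
    _ ≤ ⟪v, w⟫ - ⟪v - x, w⟫ := by gcongr; exact real_inner_le_norm _ _
    _ = ⟪x, w⟫ := by rw [inner_sub_left]; ring
  linarith [hw x hxN]

theorem inner_eq_zero_of_forall_norm_sub_le {K : Submodule ℝ F} {u v : F} (hv : v ∈ K)
    (hmin : ∀ w ∈ K, ‖u - v‖ ≤ ‖u - w‖) : ∀ w ∈ K, ⟪u - v, w⟫ = 0 :=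
  have hbdd : BddBelow (range fun w : (K : Set F) ↦ ‖u - w‖) :=
    ⟨0, forall_mem_range.2 fun _ ↦ norm_nonneg _⟩
  (K.norm_eq_iInf_iff_real_inner_eq_zero hv).1 <|
    le_antisymm (le_ciInf fun w ↦ hmin w w.2) (ciInf_le hbdd ⟨v, hv⟩)

theorem norm_sub_le_two_mul_of_isCover_sphere {K : Submodule ℝ F} {N : Set K}
    (hN : IsCover (1 / 2) (sphere 0 1) N) {f e fhat : F} (hf : f ∈ K) (hfhat : fhat ∈ K)
    (hmin : ∀ v ∈ K, ‖f + e - fhat‖ ≤ ‖f + e - v‖) {s : ℝ} (hs : 0 ≤ s)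
    (he : ∀ x ∈ N, ⟪(x : F), e⟫ < s) : ‖fhat - f‖ ≤ 2 * s := by
  have hnormal := inner_eq_zero_of_forall_norm_sub_le hfhat hmin
  refine norm_le_two_mul_of_isCover_sphere hN (w := ⟨fhat - f, K.sub_mem hfhat hf⟩) hs
    fun x hx ↦ ?_
  have := hnormal x x.2
  rw [real_inner_comm] at this
  simp only [Submodule.coe_inner, inner_sub_right, inner_add_right] at this ⊢
  linarith [he x hx]

end LeastSquares

theorem sum_card_le_card_mul {ι α : Type*} {β : ι → Type*} [Fintype ι] [Fintype α]
    {R : ι → Finset α} (hR : Pairwise fun j j' ↦ Disjoint (R j) (R j')) {N : ∀ j, Finset (β j)}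
    {m : ℕ} (hN : ∀ j, (N j).card ≤ m) (hNR : ∀ j, (N j).Nonempty → (R j).Nonempty) :
    ∑ j, (N j).card ≤ Fintype.card α * m := by
  classical
  calc ∑ j, (N j).card ≤ ∑ j, (R j).card * m := Finset.sum_le_sum fun j _ ↦ by
        rcases (N j).eq_empty_or_nonempty with h | h
        · simp [h]
        · exact (hN j).trans (Nat.le_mul_of_pos_left _ (hNR j h).card_pos)
    _ = (Finset.univ.biUnion R).card * m := by
        rw [Finset.card_biUnion fun j _ j' _ hjj' ↦ hR hjj', Finset.sum_mul]
    _ ≤ Fintype.card α * m := Nat.mul_le_mul_right _ (Finset.card_le_univ _)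

theorem nonempty_of_euclideanSpace_ne_zero {α : Type*} {R : Finset α} {x : EuclideanSpace ℝ R}
    (hx : x ≠ 0) : R.Nonempty := by
  obtain ⟨i, -⟩ := Function.ne_iff.1 fun h ↦ hx (WithLp.ofLp_injective 2 h)
  exact ⟨i, i.2⟩

section Concentration

variable {Ω : Type*} [MeasurableSpace Ω] {P : Measure Ω} {σ : ℝ}

theorem IsSubGaussian.const_mul {X : Ω → ℝ} (h : IsSubGaussian P σ X) (c : ℝ) :
    IsSubGaussian P (c * σ) (fun ω ↦ c * X ω) := by
  obtain ⟨hint, hmean, hmgf⟩ := h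
  refine ⟨hint.const_mul c, by rw [integral_const_mul, hmean, mul_zero], fun t ↦ ?_⟩
  obtain ⟨hint_exp, hle⟩ := hmgf (t * c)
  simp only [← mul_assoc]
  exact ⟨hint_exp, hle.trans_eq (by ring_nf)⟩

theorem IsSubGaussian.hasSubgaussianMGF {X : Ω → ℝ} (h : IsSubGaussian P σ X) :
    HasSubgaussianMGF X (σ ^ 2).toNNReal P where
  integrable_exp_mul t := (h.2.2 t).1
  mgf_le t := (h.2.2 t).2.trans_eq (by rw [Real.coe_toNNReal _ (sq_nonneg σ)]; ring_nf)

theorem measure_inner_ge_le [IsFiniteMeasure P] {ι : Type*} [Fintype ι] {ε : ι → Ω → ℝ}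
    (hind : iIndepFun ε P) (hsub : ∀ i, IsSubGaussian P σ (ε i)) {x : EuclideanSpace ℝ ι}
    (hx : ‖x‖ = 1) {s : ℝ} (hs : 0 ≤ s) :
    P {ω | s ≤ ⟪x, WithLp.toLp 2 (fun i ↦ ε i ω)⟫} ≤
      ENNReal.ofReal (exp (-s ^ 2 / (2 * σ ^ 2))) := by
  have hsum := HasSubgaussianMGF.measure_sum_ge_le_of_iIndepFun (s := Finset.univ)
    (hind.comp (fun i ↦ (x i * ·)) fun i ↦ measurable_const_mul (x i))
    (fun i _ ↦ ((hsub i).const_mul (x i)).hasSubgaussianMGF) hs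
  have hvar : ∑ i, ((x i * σ) ^ 2).toNNReal = σ ^ 2 := by
    rw [NNReal.coe_sum]
    simp_rw [Real.coe_toNNReal _ (sq_nonneg _), mul_pow]
    rw [← Finset.sum_mul, ← EuclideanSpace.real_norm_sq_eq, hx, one_pow, one_mul]
  have hset : {ω | s ≤ ⟪x, WithLp.toLp 2 (fun i ↦ ε i ω)⟫} =
      {ω | s ≤ ∑ i, ((x i * ·) ∘ ε i) ω} := by
    ext ω
    simp [PiLp.inner_apply, mul_comm]
  rw [hset, ← ofReal_measureReal]
  exact ENNReal.ofReal_le_ofReal (hvar ▸ hsum)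

theorem measure_exists_inner_restrictTo_ge_le [IsFiniteMeasure P] {n t m : ℕ}
    {ε : Fin n → Ω → ℝ} (hind : iIndepFun ε P) (hsub : ∀ i, IsSubGaussian P σ (ε i))
    {R : Fin t → Finset (Fin n)} (hR : Pairwise fun j j' ↦ Disjoint (R j) (R j'))
    {K : ∀ j, Submodule ℝ (EuclideanSpace ℝ (R j))} {N : ∀ j, Finset (K j)}
    (hN : ∀ j, ↑(N j) ⊆ sphere (0 : K j) 1) (hNcard : ∀ j, (N j).card ≤ m) {s : ℝ} (hs : 0 ≤ s) :
    P {ω | ∃ j, ∃ x ∈ N j, s ≤ ⟪(x : EuclideanSpace ℝ (R j)), restrictTo (R j) (ε · ω)⟫} ≤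
      (n * m : ℕ) * ENNReal.ofReal (exp (-s ^ 2 / (2 * σ ^ 2))) := by
  have hNR : ∀ j, (N j).Nonempty → (R j).Nonempty := fun j ⟨x, hx⟩ ↦
    nonempty_of_euclideanSpace_ne_zero <|
      Submodule.coe_eq_zero.not.2 (ne_of_mem_sphere (hN j hx) one_ne_zero)
  have hcount : ∑ j, (N j).card ≤ n * m := by
    simpa using sum_card_le_card_mul hR hNcard hNR
  calc
    _ = P (⋃ j, ⋃ x ∈ N j,
        {ω | s ≤ ⟪(x : EuclideanSpace ℝ (R j)), restrictTo (R j) (ε · ω)⟫}) := by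
      congr 1; ext; simp
    _ ≤ ∑ j, ∑ x ∈ N j,
        P {ω | s ≤ ⟪(x : EuclideanSpace ℝ (R j)), restrictTo (R j) (ε · ω)⟫} :=
      (measure_iUnion_fintype_le _ _).trans <|
        Finset.sum_le_sum fun j _ ↦ measure_biUnion_finset_le _ _
    _ ≤ ∑ j, ∑ x ∈ N j, ENNReal.ofReal (exp (-s ^ 2 / (2 * σ ^ 2))) := by
      gcongr with j _ x hx
      exact measure_inner_ge_le (hind.precomp Subtype.val_injective) (fun i ↦ hsub i)
        (by simpa using hN j hx) hs
    _ = (∑ j, (N j).card : ℕ) * ENNReal.ofReal (exp (-s ^ 2 / (2 * σ ^ 2))) := by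
      simp [Finset.sum_mul]
    _ ≤ _ := by gcongr

theorem ofReal_one_sub_le_measure_of_compl_subset [IsProbabilityMeasure P] {B G : Set Ω} {δ : ℝ}
    (hδ : 0 ≤ δ) (hB : P B ≤ ENNReal.ofReal δ) (hG : Bᶜ ⊆ G) : ENNReal.ofReal (1 - δ) ≤ P G := calc
  ENNReal.ofReal (1 - δ) = P univ - ENNReal.ofReal δ := by
    rw [measure_univ, ENNReal.ofReal_sub _ hδ, ENNReal.ofReal_one]
  _ ≤ P univ - P B := tsub_le_tsub_left hB _
  _ ≤ P (univ \ B) := le_measure_sdiff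
  _ ≤ P G := measure_mono (by rwa [← compl_eq_univ_sdiff])

end Concentration

theorem log_natCast_div_nonneg (n : ℕ) {δ : ℝ} (hδ0 : 0 < δ) (hδ1 : δ ≤ 1) :
    0 ≤ log (n / δ) := by
  rcases n.eq_zero_or_pos with rfl | hn
  · simp
  exact log_nonneg <| (one_le_div hδ0).2 <| hδ1.trans (mod_cast hn)

theorem natCast_mul_exp_neg_log_div_le (n : ℕ) {δ : ℝ} (hδ : 0 < δ) :
    n * exp (-log (n / δ)) ≤ δ := by
  rcases n.eq_zero_or_pos with rfl | hn
  · simpa using hδ.le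
  rw [exp_neg, exp_log (by positivity), inv_div, mul_div_cancel₀ _ (by positivity)]

/-- The level `s` solving `n * 5 ^ r * exp (-s ^ 2 / (2 * σ ^ 2)) = δ` (for `n ≠ 0`). -/
noncomputable def deviationLevel (σ : ℝ) (n r : ℕ) (δ : ℝ) : ℝ :=
  σ * √(2 * (r * log 5 + log (n / δ)))

section DeviationLevel

variable (σ : ℝ) (n r : ℕ) {δ : ℝ}

theorem deviationLevel_nonneg (hσ : 0 ≤ σ) : 0 ≤ deviationLevel σ n r δ := by
  unfold deviationLevel; positivity

theorem sq_deviationLevel (hδ0 : 0 < δ) (hδ1 : δ ≤ 1) :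
    deviationLevel σ n r δ ^ 2 = 2 * σ ^ 2 * (r * log 5 + log (n / δ)) := by
  have := log_natCast_div_nonneg n hδ0 hδ1
  rw [deviationLevel, mul_pow, sq_sqrt (by positivity)]
  ring

theorem natCast_mul_pow_mul_exp_neg_deviationLevel_le {σ : ℝ} (hσ : σ ≠ 0) (hδ0 : 0 < δ)
    (hδ1 : δ ≤ 1) : n * 5 ^ r * exp (-deviationLevel σ n r δ ^ 2 / (2 * σ ^ 2)) ≤ δ := by
  rw [sq_deviationLevel σ n r hδ0 hδ1, neg_div, mul_div_cancel_left₀ _ (by positivity), neg_add,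
    exp_add, exp_neg (r * log 5), exp_nat_mul, exp_log (by norm_num), mul_assoc,
    mul_inv_cancel_left₀ (by positivity)]
  exact natCast_mul_exp_neg_log_div_le n hδ0

theorem mul_sq_two_mul_deviationLevel_le (t : ℕ) (hδ0 : 0 < δ) (hδ1 : δ ≤ 1) :
    t * (2 * deviationLevel σ n r δ) ^ 2 ≤ 8 * log 5 * σ ^ 2 * t * (r + log (n / δ)) := by
  have hlog := log_natCast_div_nonneg n hδ0 hδ1
  have hlog5 : 1 ≤ log 5 := by
    rw [le_log_iff_exp_le (by norm_num)]
    linarith [exp_one_lt_d9]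
  calc t * (2 * deviationLevel σ n r δ) ^ 2 = 8 * σ ^ 2 * t * (r * log 5 + log (n / δ)) := by
        rw [mul_pow, sq_deviationLevel σ n r hδ0 hδ1]; ring
    _ ≤ 8 * σ ^ 2 * t * (r * log 5 + log 5 * log (n / δ)) := by
        gcongr; exact le_mul_of_one_le_left hlog hlog5
    _ = 8 * log 5 * σ ^ 2 * t * (r + log (n / δ)) := by ring

end DeviationLevel

/-- Lemma 2.6 of the paper: with probability `1 - δ`, the total squared error of the
piecewise least-squares fits, over `t` disjoint index sets on each of which the true
function lies in a subspace of dimension at most `r`, is at most `C·σ²·t·(r + log(n/δ))`. -/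
theorem piecewise_least_squares_error_bound :
    ∃ C : ℝ, 0 < C ∧
      ∀ (Ω : Type) (_ : MeasurableSpace Ω) (P : Measure Ω), IsProbabilityMeasure P →
      ∀ (n : ℕ) (σ : ℝ), 0 < σ →
      ∀ (ε : Fin n → Ω → ℝ), (∀ i, Measurable (ε i)) →
        iIndepFun ε P →
        (∀ i, IsSubGaussian P σ (ε i)) →
      ∀ (t r : ℕ) (R : Fin t → Finset (Fin n)),
        Pairwise (fun j j' => Disjoint (R j) (R j')) →
      ∀ (S : ∀ j, Submodule ℝ (EuclideanSpace ℝ ↥(R j))),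
        (∀ j, Module.finrank ℝ ↥(S j) ≤ r) →
      ∀ (f : Fin n → ℝ), (∀ j, restrictTo (R j) f ∈ S j) →
      ∀ (fhat : ∀ j, Ω → EuclideanSpace ℝ ↥(R j)),
        (∀ j ω, fhat j ω ∈ S j) →
        (∀ j ω, ∀ v ∈ S j,
          ‖restrictTo (R j) (fun i => f i + ε i ω) - fhat j ω‖ ≤
            ‖restrictTo (R j) (fun i => f i + ε i ω) - v‖) →
      ∀ δ : ℝ, δ ∈ Set.Ioo (0 : ℝ) 1 →
        ENNReal.ofReal (1 - δ) ≤
          P {ω | ∑ j, ‖fhat j ω - restrictTo (R j) f‖ ^ 2 ≤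
              C * σ ^ 2 * t * (r + Real.log (n / δ))} := by
  refine ⟨8 * log 5, by positivity, ?_⟩
  intro Ω _ P _ n σ hσ ε _ hind hsub t r R hdisj S hSr f hf fhat hfhatS hfhat δ ⟨hδ0, hδ1⟩
  choose N hNsphere hNcard hNcover using fun j ↦ exists_finset_isCover_sphere (S j)
  set s := deviationLevel σ n r δ
  have hs : 0 ≤ s := deviationLevel_nonneg σ n r hσ.le
  refine ofReal_one_sub_le_measure_of_compl_subset hδ0.le (B := {ω | ∃ j, ∃ x ∈ N j,
    s ≤ ⟪(x : EuclideanSpace ℝ (R j)), restrictTo (R j) (ε · ω)⟫}) ?_ fun ω hω ↦ ?_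
  · calc _ ≤ ((n * 5 ^ r : ℕ) : ℝ≥0∞) * ENNReal.ofReal (exp (-s ^ 2 / (2 * σ ^ 2))) :=
          measure_exists_inner_restrictTo_ge_le hind hsub hdisj hNsphere
            (fun j ↦ (hNcard j).trans (Nat.pow_le_pow_right (by norm_num) (hSr j))) hs
      _ ≤ ENNReal.ofReal δ := by
          rw [← ENNReal.ofReal_natCast, ← ENNReal.ofReal_mul (by positivity)]
          exact ENNReal.ofReal_le_ofReal <| mod_cast
            natCast_mul_pow_mul_exp_neg_deviationLevel_le n r hσ.ne' hδ0 hδ1.le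
  · simp only [mem_compl_iff, mem_ofPred_eq, not_exists, not_and, not_le] at hω
    calc ∑ j, ‖fhat j ω - restrictTo (R j) f‖ ^ 2 ≤ ∑ _j : Fin t, (2 * s) ^ 2 := by
          gcongr with j
          exact norm_sub_le_two_mul_of_isCover_sphere (hNcover j) (hf j) (hfhatS j ω)
            (e := restrictTo (R j) (ε · ω)) (hfhat j ω) hs (hω j)
      _ = t * (2 * s) ^ 2 := by simp
      _ ≤ 8 * log 5 * σ ^ 2 * t * (r + log (n / δ)) :=
          mul_sq_two_mul_deviationLevel_le σ n r t hδ0 hδ1.le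
end
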